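/- arXiv:2007.12767 — 5 statements merged into one kernel-verified Lean document; each statement's English description precedes it below -/
import Mathlib

section
/- Let L be a Lie algebra over a field K with basis (v_i)_{i∈I}, and let S(L) be its symmetric algebra with its Poisson bracket. Then {a,{b,c}} = 0 for all a,b,c ∈ S(L) if and only if L is abelian. -/
open MvPolynomial

/-! Writing `c = {x, y}` with `{y, y} = 0`, the Leibniz rule gives `{x * y, y} = y * c` and then
`{x, y * c} = c ^ 2 - y * {c, x}`. When all double brackets vanish, the left side and `{c, x}`
are double brackets, so `c ^ 2 = 0`, which forces `c = 0` in a reduced ring such as `K[X_i]`.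
Applied to `x = X i`, `y = X j` and using injectivity of `θ`, every bracket of basis vectors
vanishes. Conversely, if `L` is abelian the bracket vanishes on the generators `X i`, and a
bracket satisfying the Leibniz rule is a derivation in each argument, hence vanishes
identically. -/

theorem Module.Basis.isLieAbelian_of_lie_eq_zero {K L I : Type*} [CommRing K] [LieRing L]
    [LieAlgebra K L] (B : Module.Basis I K L) (h : ∀ i j, ⁅B i, B j⁆ = 0) : IsLieAbelian L := by
  have hzero : (LieModule.toEnd K L L : L →ₗ[K] Module.End K L) = 0 :=
    LinearMap.ext_basis B B fun i j => h i j
  exact ⟨fun x y => LinearMap.congr_fun (LinearMap.congr_fun hzero x) y⟩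

section Bracket

variable {R A : Type*} [CommRing R] [CommRing A] [Algebra R A]

theorem bracket_eq_zero_of_bracket_bracket_eq_zero [IsReduced A] (P : A →ₗ[R] A →ₗ[R] A)
    (hanti : ∀ f g, P f g = - P g f) (hleib : ∀ f g h, P (f * g) h = f * P g h + g * P f h)
    (hmeta : ∀ a b c, P a (P b c) = 0) {x y : A} (hyy : P y y = 0) : P x y = 0 := by
  set c := P x y with hc
  have hxy_y : P (x * y) y = y * c := by rw [hleib, hyy, mul_zero, zero_add]
  have hsq : P x (y * c) = c ^ 2 := by
    rw [hanti, hleib, hanti c x, hmeta, hanti y x, ← hc]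
    ring
  refine IsReduced.eq_zero c ⟨2, ?_⟩
  rw [← hsq, ← hxy_y, hmeta]

def bracketDerivation (P : A →ₗ[R] A →ₗ[R] A)
    (hleib : ∀ f g h, P (f * g) h = f * P g h + g * P f h) (h : A) : Derivation R A A :=
  Derivation.mk' (P.flip h) fun f g => hleib f g h

end Bracket

theorem MvPolynomial.bracket_eq_zero_of_bracket_X_X {R σ : Type*} [CommRing R]
    (P : MvPolynomial σ R →ₗ[R] MvPolynomial σ R →ₗ[R] MvPolynomial σ R)
    (hanti : ∀ f g, P f g = - P g f) (hleib : ∀ f g h, P (f * g) h = f * P g h + g * P f h)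
    (hX : ∀ i j, P (X i) (X j) = 0) : P = 0 := by
  have hleft : ∀ j f, P f (X j) = 0 := fun j f => by
    have : bracketDerivation P hleib (X j) = 0 := derivation_ext fun i => hX i j
    exact Derivation.congr_fun this f
  refine LinearMap.ext fun f => LinearMap.ext fun g => ?_
  have : bracketDerivation P hleib g = 0 :=
    derivation_ext fun i => show P (X i) g = 0 by rw [hanti, hleft, neg_zero]
  exact Derivation.congr_fun this f

theorem symmetricAlgebra_metabelian_iff_abelian_general
    {K L I : Type*} [Field K] [LieRing L] [LieAlgebra K L] (B : Module.Basis I K L)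
    (P : MvPolynomial I K →ₗ[K] MvPolynomial I K →ₗ[K] MvPolynomial I K)
    (hanti : ∀ f g, P f g = - P g f)
    (hleib : ∀ f g h, P (f * g) h = f * P g h + g * P f h)
    (hX : ∀ i j, P (X i) (X j) = B.constr K (fun i => (X i : MvPolynomial I K)) ⁅B i, B j⁆) :
    (∀ a b c : MvPolynomial I K, P a (P b c) = 0) ↔ IsLieAbelian L := by
  have hθ := B.injective_constr_of_linearIndependent (R₂ := K) (linearIndependent_X I K)
  constructor
  · intro hmeta
    refine B.isLieAbelian_of_lie_eq_zero fun i j => hθ ?_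
    rw [map_zero, ← hX]
    exact bracket_eq_zero_of_bracket_bracket_eq_zero P hanti hleib hmeta
      (by rw [hX, lie_self, map_zero])
  · intro _
    have hP : P = 0 := bracket_eq_zero_of_bracket_X_X P hanti hleib fun i j => by
      rw [hX, trivial_lie_zero, map_zero]
    simp [hP]

/-- Shestakov: for a Lie algebra `L` with basis `(v_i)` over a field `K`, identify the
symmetric algebra `S(L)` with the polynomial algebra `K[X_i]`, let `θ : L → S(L)` be the
linear map with `θ(v_i) = X_i`, and let `{·,·}` be the Poisson bracket, i.e. the unique
bilinear, alternating map satisfying the Leibniz rule with `{X_i, X_j} = θ([v_i, v_j])`.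
Then `{a, {b, c}} = 0` for all `a, b, c ∈ S(L)` iff `L` is abelian. -/
theorem symmetricAlgebra_metabelian_iff_abelian
    {K L I : Type*} [Field K] [LieRing L] [LieAlgebra K L] (B : Module.Basis I K L)
    (P : MvPolynomial I K →ₗ[K] MvPolynomial I K →ₗ[K] MvPolynomial I K)
    (halt : ∀ f, P f f = 0)
    (hanti : ∀ f g, P f g = - P g f)
    (hjac : ∀ f g h, P f (P g h) = P (P f g) h + P g (P f h))
    (hleib : ∀ f g h, P (f * g) h = f * P g h + g * P f h)
    (hX : ∀ i j, P (X i) (X j) = B.constr K (fun i => (X i : MvPolynomial I K)) ⁅B i, B j⁆) :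
    (∀ a b c : MvPolynomial I K, P a (P b c) = 0) ↔ IsLieAbelian L :=
  symmetricAlgebra_metabelian_iff_abelian_general B P hanti hleib hX
end

section
/- Let L be a Lie algebra over an arbitrary field K with basis (v_i)_{i∈I}, and let S(L) be its symmetric algebra with its Poisson bracket. The following are equivalent: (1) L is abelian; (2) S(L) is strongly Lie nilpotent; (3) S(L) is Lie nilpotent. -/
open MvPolynomial

/-- The lower central series of a Poisson algebra `S` with bracket `P`:
`γ 0 = S` (corresponding to `γ_1`) and `γ (n+1)` is the `K`-span of all brackets `{a, b}`
with `a ∈ γ n`, `b ∈ S`. -/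
def poissonLowerCentralSeries (K S : Type*) [Field K] [CommRing S] [Algebra K S]
    (P : S →ₗ[K] S →ₗ[K] S) : ℕ → Submodule K S
  | 0 => ⊤
  | n + 1 => Submodule.span K
      {x : S | ∃ a ∈ poissonLowerCentralSeries K S P n, ∃ b : S, x = P a b}

/-- The upper Lie powers of a Poisson algebra `S` with bracket `P`: `S^(0) = S` and
`S^(n+1)` is the `K`-span of all products `{a, b} * c` with `a ∈ S^(n)`, `b, c ∈ S`. -/
def poissonUpperLiePower (K S : Type*) [Field K] [CommRing S] [Algebra K S]
    (P : S →ₗ[K] S →ₗ[K] S) : ℕ → Submodule K S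
  | 0 => ⊤
  | n + 1 => Submodule.span K
      {x : S | ∃ a ∈ poissonUpperLiePower K S P n, ∃ b c : S, x = P a b * c}

/-!
If `L` is abelian, the bracket vanishes on pairs of variables and hence, by the Leibniz rule,
everywhere, so both series vanish at the first step. Conversely, `θ` is injective and maps the
lower central series of `L` into either series, so if the series reaches `0` then `L` is
nilpotent. A nilpotent non-abelian `L` has a nonzero central bracket `z = ⁅u, w⁆`; with
`x = θ u`, `y = θ w`, `ζ = θ z` one has `{x ζ ^ n, x y} = x ζ ^ (n + 1)`, so the nonzero
polynomial `x ζ ^ n` lies in the `n`-th term of either series.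
-/

namespace MvPolynomial

theorem linearMap_eq_zero_of_leibniz {R σ : Type*} [CommRing R]
    (D : MvPolynomial σ R →ₗ[R] MvPolynomial σ R)
    (hD : ∀ f g, D (f * g) = f * D g + g * D f) (hX : ∀ i, D (X i) = 0) : D = 0 := by
  have : Derivation.mk' D hD = 0 := derivation_ext hX
  exact congrArg Derivation.toLinearMap this

end MvPolynomial

section PoissonAlgebra

variable {R S : Type*} [CommRing R] [CommRing S] [Algebra R S] {P : S →ₗ[R] S →ₗ[R] S}

theorem bracket_mul_right (hanti : ∀ f g, P f g = -P g f)
    (hleib : ∀ f g h, P (f * g) h = f * P g h + g * P f h) (f g h : S) :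
    P f (g * h) = g * P f h + h * P f g := by
  rw [hanti f (g * h), hleib, hanti f h, hanti f g]
  ring

theorem bracket_pow_eq_zero (hleib : ∀ f g h, P (f * g) h = f * P g h + g * P f h)
    {z : S} (hz : ∀ f, P z f = 0) (n : ℕ) (f : S) : P (z ^ n) f = 0 := by
  induction n with
  | zero => simpa using hleib 1 1 f
  | succ n ih => rw [pow_succ, hleib, ih, hz, mul_zero, mul_zero, add_zero]

theorem mul_pow_mem_of_bracket_mem (halt : ∀ f, P f f = 0) (hanti : ∀ f g, P f g = -P g f)
    (hleib : ∀ f g h, P (f * g) h = f * P g h + g * P f h)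
    {T : ℕ → Submodule R S} (hT0 : T 0 = ⊤)
    (hstep : ∀ n a b, a ∈ T n → P a b ∈ T (n + 1))
    {x y ζ : S} (hxy : P x y = ζ) (hζ : ∀ f, P ζ f = 0) (n : ℕ) : x * ζ ^ n ∈ T n := by
  induction n with
  | zero => simp [hT0]
  | succ n ih =>
    have key : P (x * ζ ^ n) (x * y) = x * ζ ^ (n + 1) := by
      rw [bracket_mul_right hanti hleib, hleib x _ y, hleib x _ x,
        bracket_pow_eq_zero hleib hζ, bracket_pow_eq_zero hleib hζ, halt, hxy]
      ring
    simpa only [key] using hstep n _ (x * y) ih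

end PoissonAlgebra

section Series

variable {K S : Type*} [Field K] [CommRing S] [Algebra K S] {P : S →ₗ[K] S →ₗ[K] S}

theorem poissonLowerCentralSeries_bracket_mem {n : ℕ} {a : S}
    (ha : a ∈ poissonLowerCentralSeries K S P n) (b : S) :
    P a b ∈ poissonLowerCentralSeries K S P (n + 1) :=
  Submodule.subset_span ⟨a, ha, b, rfl⟩

theorem poissonUpperLiePower_bracket_mem {n : ℕ} {a : S}
    (ha : a ∈ poissonUpperLiePower K S P n) (b : S) :
    P a b ∈ poissonUpperLiePower K S P (n + 1) :=
  Submodule.subset_span ⟨a, ha, b, 1, (mul_one _).symm⟩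

theorem poissonLowerCentralSeries_one_eq_bot (hP : P = 0) :
    poissonLowerCentralSeries K S P 1 = ⊥ := by
  simp [poissonLowerCentralSeries, hP]

theorem poissonUpperLiePower_one_eq_bot (hP : P = 0) :
    poissonUpperLiePower K S P 1 = ⊥ := by
  simp [poissonUpperLiePower, hP]

end Series

section LieAlgebra

variable {L : Type*} [LieRing L]

theorem LieAlgebra.exists_lie_ne_zero_forall_lie_eq_zero [LieModule.IsNilpotent L L]
    (h : ¬IsLieAbelian L) : ∃ u w : L, ⁅u, w⁆ ≠ 0 ∧ ∀ t : L, ⁅t, ⁅u, w⁆⁆ = 0 := by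
  have h2 : 2 ≤ LieModule.nilpotencyLength L L :=
    not_le.mp fun hle => h (LieModule.isTrivial_of_nilpotencyLength_le_one L L (by omega))
  obtain ⟨m, hm⟩ : ∃ m, LieModule.nilpotencyLength L L = m + 2 :=
    ⟨LieModule.nilpotencyLength L L - 2, by omega⟩
  obtain ⟨hbot, hne⟩ := (LieModule.nilpotencyLength_eq_succ_iff ℤ L L (m + 1)).mp hm
  rw [LieModule.lowerCentralSeries_succ, Ne, LieSubmodule.lie_eq_bot_iff] at hne
  push Not at hne
  obtain ⟨u, -, w, hw, huw⟩ := hne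
  refine ⟨u, w, huw, fun t => ?_⟩
  have hmem := LieSubmodule.lie_mem_lie (LieSubmodule.mem_top t)
    (LieSubmodule.lie_mem_lie (LieSubmodule.mem_top u) hw)
  rwa [← LieModule.lowerCentralSeries_succ, ← LieModule.lowerCentralSeries_succ, hbot,
    LieSubmodule.mem_bot] at hmem

end LieAlgebra

section SymmetricAlgebra

variable {K L I : Type*} [Field K] [LieRing L] [LieAlgebra K L] {B : Module.Basis I K L}
  {P : MvPolynomial I K →ₗ[K] MvPolynomial I K →ₗ[K] MvPolynomial I K}

theorem bracket_eq_zero_of_bracket_X_eq_zero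
    (hleib : ∀ f g h, P (f * g) h = f * P g h + g * P f h)
    {g : MvPolynomial I K} (hg : ∀ i, P (X i) g = 0) (f : MvPolynomial I K) : P f g = 0 :=
  LinearMap.congr_fun (MvPolynomial.linearMap_eq_zero_of_leibniz (P.flip g) (hleib · · g) hg) f

theorem bracket_eq_zero_of_isLieAbelian (hanti : ∀ f g, P f g = -P g f)
    (hleib : ∀ f g h, P (f * g) h = f * P g h + g * P f h)
    (hX : ∀ i j, P (X i) (X j) = B.constr K (fun i => (X i : MvPolynomial I K)) ⁅B i, B j⁆)
    [IsLieAbelian L] : P = 0 := by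
  have hXX (i j : I) : P (X i) (X j) = 0 := by rw [hX, trivial_lie_zero, map_zero]
  have hXf (j : I) (f : MvPolynomial I K) : P (X j) f = 0 := by
    rw [hanti, bracket_eq_zero_of_bracket_X_eq_zero hleib (hXX · j), neg_zero]
  refine LinearMap.ext₂ fun f g => ?_
  exact bracket_eq_zero_of_bracket_X_eq_zero hleib (hXf · g) f

theorem bracket_constr
    (hX : ∀ i j, P (X i) (X j) = B.constr K (fun i => (X i : MvPolynomial I K)) ⁅B i, B j⁆)
    (u w : L) : P (B.constr K X u) (B.constr K X w) = B.constr K X ⁅u, w⁆ := by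
  let lie : L →ₗ[K] L →ₗ[K] L := LieModule.toEnd K L L
  have : P.compl₁₂ (B.constr K X) (B.constr K X) = lie.compr₂ (B.constr K X) :=
    LinearMap.ext_basis B B fun i j => by simp [lie, hX]
  exact LinearMap.congr_fun₂ this u w

theorem bracket_constr_eq_zero_of_forall_lie_eq_zero (hanti : ∀ f g, P f g = -P g f)
    (hleib : ∀ f g h, P (f * g) h = f * P g h + g * P f h)
    (hX : ∀ i j, P (X i) (X j) = B.constr K (fun i => (X i : MvPolynomial I K)) ⁅B i, B j⁆)
    {z : L} (hz : ∀ t : L, ⁅t, z⁆ = 0) (f : MvPolynomial I K) : P (B.constr K X z) f = 0 := by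
  have hXz (i : I) : P (X i) (B.constr K X z) = 0 := by
    rw [← B.constr_basis K X i, bracket_constr hX, hz, map_zero]
  rw [hanti, bracket_eq_zero_of_bracket_X_eq_zero hleib hXz, neg_zero]

theorem lowerCentralSeries_le_comap_constr
    (hX : ∀ i j, P (X i) (X j) = B.constr K (fun i => (X i : MvPolynomial I K)) ⁅B i, B j⁆)
    {T : ℕ → Submodule K (MvPolynomial I K)} (hT0 : T 0 = ⊤)
    (hstep : ∀ n a b, a ∈ T n → P a b ∈ T (n + 1)) (n : ℕ) :
    LieSubmodule.toSubmodule (LieModule.lowerCentralSeries K L L n) ≤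
      (T n).comap (B.constr K X) := by
  induction n with
  | zero => simp [hT0]
  | succ n ih =>
    rw [LieModule.lowerCentralSeries_succ, LieSubmodule.lieIdeal_oper_eq_linear_span',
      Submodule.span_le]
    rintro _ ⟨u, -, w, hw, rfl⟩
    rw [SetLike.mem_coe, Submodule.mem_comap, ← lie_skew, map_neg, ← bracket_constr hX]
    exact neg_mem (hstep n _ _ (ih hw))

theorem isLieAbelian_of_series_eq_bot (halt : ∀ f, P f f = 0) (hanti : ∀ f g, P f g = -P g f)
    (hleib : ∀ f g h, P (f * g) h = f * P g h + g * P f h)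
    (hX : ∀ i j, P (X i) (X j) = B.constr K (fun i => (X i : MvPolynomial I K)) ⁅B i, B j⁆)
    (T : ℕ → Submodule K (MvPolynomial I K)) (hT0 : T 0 = ⊤)
    (hstep : ∀ n a b, a ∈ T n → P a b ∈ T (n + 1)) {s : ℕ} (hs : T s = ⊥) :
    IsLieAbelian L := by
  have hθ : Function.Injective (B.constr K X) :=
    B.injective_constr_of_linearIndependent (linearIndependent_X I K)
  have : LieModule.IsNilpotent L L := by
    refine LieModule.IsNilpotent.mk (R := K) L (k := s) ((LieSubmodule.eq_bot_iff _).mpr ?_)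
    intro z hz
    have := lowerCentralSeries_le_comap_constr hX hT0 hstep s hz
    rw [hs, Submodule.mem_comap, Submodule.mem_bot] at this
    exact hθ (this.trans (map_zero _).symm)
  by_contra hab
  obtain ⟨u, w, huw, hcentral⟩ := LieAlgebra.exists_lie_ne_zero_forall_lie_eq_zero hab
  have hmem := mul_pow_mem_of_bracket_mem halt hanti hleib hT0 hstep (bracket_constr hX u w)
    (bracket_constr_eq_zero_of_forall_lie_eq_zero hanti hleib hX hcentral) s
  rw [hs, Submodule.mem_bot] at hmem
  have hu : u ≠ 0 := by rintro rfl; exact huw (zero_lie w)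
  exact mul_ne_zero ((map_ne_zero_iff _ hθ).mpr hu)
    (pow_ne_zero _ ((map_ne_zero_iff _ hθ).mpr huw)) hmem

end SymmetricAlgebra

theorem symmetricAlgebra_lieNilpotent_iff_abelian_general
    {K L I : Type*} [Field K] [LieRing L] [LieAlgebra K L] (B : Module.Basis I K L)
    (P : MvPolynomial I K →ₗ[K] MvPolynomial I K →ₗ[K] MvPolynomial I K)
    (halt : ∀ f, P f f = 0)
    (hanti : ∀ f g, P f g = - P g f)
    (hleib : ∀ f g h, P (f * g) h = f * P g h + g * P f h)
    (hX : ∀ i j, P (X i) (X j) = B.constr K (fun i => (X i : MvPolynomial I K)) ⁅B i, B j⁆) :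
    ((∃ s : ℕ, poissonUpperLiePower K (MvPolynomial I K) P s = ⊥) ↔ IsLieAbelian L) ∧
    ((∃ s : ℕ, poissonLowerCentralSeries K (MvPolynomial I K) P s = ⊥) ↔ IsLieAbelian L) := by
  refine ⟨⟨?_, ?_⟩, ⟨?_, ?_⟩⟩
  · rintro ⟨s, hs⟩
    exact isLieAbelian_of_series_eq_bot halt hanti hleib hX
      (poissonUpperLiePower K _ P) rfl (fun _ _ b ha => poissonUpperLiePower_bracket_mem ha b) hs
  · intro _
    exact ⟨1, poissonUpperLiePower_one_eq_bot (bracket_eq_zero_of_isLieAbelian hanti hleib hX)⟩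
  · rintro ⟨s, hs⟩
    exact isLieAbelian_of_series_eq_bot halt hanti hleib hX
      (poissonLowerCentralSeries K _ P) rfl
      (fun _ _ b ha => poissonLowerCentralSeries_bracket_mem ha b) hs
  · intro _
    exact ⟨1, poissonLowerCentralSeries_one_eq_bot
      (bracket_eq_zero_of_isLieAbelian hanti hleib hX)⟩

/-- For a Lie algebra `L` with basis `(v_i)` over an arbitrary field `K`, identify the
symmetric algebra `S(L)` with the polynomial algebra `K[X_i]`, let `θ : L → S(L)` be the
linear map with `θ(v_i) = X_i`, and let `{·,·}` be the Poisson bracket, i.e. the unique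
bilinear, alternating map satisfying the Leibniz rule with `{X_i, X_j} = θ([v_i, v_j])`.
The following are equivalent: `L` is abelian; `S(L)` is strongly Lie nilpotent; `S(L)` is
Lie nilpotent. -/
theorem symmetricAlgebra_lieNilpotent_iff_abelian
    {K L I : Type*} [Field K] [LieRing L] [LieAlgebra K L] (B : Module.Basis I K L)
    (P : MvPolynomial I K →ₗ[K] MvPolynomial I K →ₗ[K] MvPolynomial I K)
    (halt : ∀ f, P f f = 0)
    (hanti : ∀ f g, P f g = - P g f)
    (hjac : ∀ f g h, P f (P g h) = P (P f g) h + P g (P f h))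
    (hleib : ∀ f g h, P (f * g) h = f * P g h + g * P f h)
    (hX : ∀ i j, P (X i) (X j) = B.constr K (fun i => (X i : MvPolynomial I K)) ⁅B i, B j⁆) :
    ((∃ s : ℕ, poissonUpperLiePower K (MvPolynomial I K) P s = ⊥) ↔ IsLieAbelian L) ∧
    ((∃ s : ℕ, poissonLowerCentralSeries K (MvPolynomial I K) P s = ⊥) ↔ IsLieAbelian L) :=
  symmetricAlgebra_lieNilpotent_iff_abelian_general B P halt hanti hleib hX
end

section
/- Let U, V, W be vector spaces over a field K and φ : U × V → W a bilinear map. Suppose there are integers m and l such that dim_K φ(u, V) ≤ m for every u ∈ U and dim_K φ(U, v) ≤ l for every v ∈ V, where φ(u,V) and φ(U,v) denote the subspaces {φ(u,v) : v ∈ V} and the span of {φ(u,v) : u ∈ U}, respectively. Then the K-linear span of the set φ(U,V) = {φ(u,v) : u ∈ U, v ∈ V} has dimension at most m·l. -/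
/-!
Induction on `m`. Choose `v₀` with `dim φ(U, v₀)` maximal and pass to `W ⧸ φ(U, v₀)`: the span of
`φ(U, V)` loses at most `l` dimensions, the slices `φ(U, v)` keep dimension `≤ l`, and every slice
`φ(u, V)` of dimension `m + 1` loses a dimension, by P. M. Neumann's observation that a slice
`X = φ(u₀, V)` of maximal dimension `n > 0` meets `Y = φ(U, v₀)`.

For the latter, suppose `X ⊓ Y = 0` and (by symmetry) `n ≤ dim Y`. Projecting onto `X` along `Y`
and precomposing with a section of `φ u₀ : V → X` gives endomorphisms `T u` of `X`, linear in `u`,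
with `T u₀ = 1`. If `φ(u, v₀) ≠ 0`, the projection kills this nonzero vector of the at most
`n`-dimensional `φ(u, V)`, so `T u` is singular. But the pencil `t • 1 + T u'`, with `u'` running
over a lift of `Y`, has a nonsingular member with `φ(u', v₀) ≠ 0`: over an infinite field because
`det (t • 1 + f)` is a monic polynomial in `t`, over a finite field by Chevalley–Warning, since
the pencil has more parameters than its size.
-/

open Module LinearMap

universe u

namespace Matrix

open MvPolynomial

variable {ι σ R : Type*} [CommRing R]

theorem isHomogeneous_det [Fintype ι] [DecidableEq ι] {M : Matrix ι ι (MvPolynomial σ R)}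
    (hM : ∀ i j, (M i j).IsHomogeneous 1) : M.det.IsHomogeneous (Fintype.card ι) := by
  rw [Matrix.det_apply']
  refine IsHomogeneous.sum _ _ _ fun e _ => ?_
  have hsign : ((Equiv.Perm.sign e : ℤ) : MvPolynomial σ R).IsHomogeneous 0 := by
    rw [← map_intCast (C : R →+* MvPolynomial σ R)]
    exact isHomogeneous_C σ _
  have h := hsign.mul (IsHomogeneous.prod Finset.univ _ (fun _ => 1) fun i _ => hM (e i) i)
  rwa [Finset.sum_const, smul_eq_mul, mul_one, zero_add, Finset.card_univ] at h

variable [Fintype σ]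

noncomputable def linearPencil (B : σ → Matrix ι ι R) : Matrix ι ι (MvPolynomial σ R) :=
  of fun i j => ∑ o, C (B o i j) * X o

variable [Fintype ι] [DecidableEq ι]

theorem isHomogeneous_det_linearPencil (B : σ → Matrix ι ι R) :
    (linearPencil B).det.IsHomogeneous (Fintype.card ι) :=
  isHomogeneous_det fun _ _ => IsHomogeneous.sum _ _ _ fun _ _ =>
    by simpa using (isHomogeneous_C σ _).mul (isHomogeneous_X R _)

theorem eval_det_linearPencil (B : σ → Matrix ι ι R) (x : σ → R) :
    eval x (linearPencil B).det = (∑ o, x o • B o).det := by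
  rw [RingHom.map_det]
  congr 1
  ext i j
  simp [linearPencil, Matrix.sum_apply, mul_comm]

variable {K : Type*} [Field K]

theorem sum_det_pow_card_sub_one_eq_zero [Fintype K] [DecidableEq σ] (B : σ → Matrix ι ι K)
    (h : Fintype.card ι < Fintype.card σ) :
    ∑ x : σ → K, (∑ o, x o • B o).det ^ (Fintype.card K - 1) = 0 := by
  have hq : 0 < Fintype.card K - 1 := Nat.sub_pos_of_lt Fintype.one_lt_card
  simp_rw [← eval_det_linearPencil, ← map_pow]
  refine sum_eval_eq_zero _ ?_
  calc _ ≤ Fintype.card ι * (Fintype.card K - 1) :=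
        ((isHomogeneous_det_linearPencil B).pow _).totalDegree_le
    _ < _ := by rw [mul_comm]; exact Nat.mul_lt_mul_of_pos_left h hq

theorem exists_det_smul_one_add_sum_ne_zero_of_finite [Finite K] [Nonempty ι]
    (h : Fintype.card ι ≤ Fintype.card σ) (A : σ → Matrix ι ι K) :
    ∃ (t : K) (c : σ → K), c ≠ 0 ∧ (t • 1 + ∑ k, c k • A k).det ≠ 0 := by
  classical
  have := Fintype.ofFinite K
  by_contra! hA
  have hq : Fintype.card K - 1 ≠ 0 := (Nat.sub_pos_of_lt Fintype.one_lt_card).ne'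
  have hval (t : K) (c : σ → K) : (t • 1 + ∑ k, c k • A k).det ^ (Fintype.card K - 1) =
      if c = 0 then 1 - if t = 0 then 1 else 0 else 0 := by
    by_cases hc : c = 0
    · subst hc
      by_cases ht : t = 0
      · simp [ht, hq]
      · simp [ht, FiniteField.pow_card_sub_one_eq_one _ (pow_ne_zero _ ht)]
    · simp [hc, hA t c hc, hq]
  -- Chevalley–Warning for the pencil `x none • 1 + ∑ k, x (some k) • A k`, whose terms are
  -- computed by `hval`: the sum would be `#{t | t ≠ 0} = -1`.
  have hsum := sum_det_pow_card_sub_one_eq_zero (Option.elim' 1 A)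
    (by simpa using Nat.lt_succ_of_le h)
  rw [← (Equiv.piOptionEquivProd (β := fun _ => K)).symm.sum_comp, Fintype.sum_prod_type] at hsum
  simp only [Fintype.sum_option, Equiv.piOptionEquivProd_symm_apply, Option.elim'] at hsum
  simp [hval, Finset.sum_sub_distrib] at hsum

end Matrix

namespace LinearMap

variable {K X C : Type*} [Field K] [AddCommGroup X] [Module K X] [FiniteDimensional K X]
  [AddCommGroup C] [Module K C]

theorem exists_det_smul_one_add_ne_zero [Infinite K] (f : Module.End K X) :
    ∃ t : K, (t • 1 + f).det ≠ 0 := by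
  by_contra! h
  refine (LinearMap.charpoly_monic (-f)).ne_zero (Polynomial.funext fun t => ?_)
  rw [LinearMap.eval_charpoly, Polynomial.eval_zero, Algebra.algebraMap_eq_smul_one,
    sub_neg_eq_add, h]

theorem exists_ne_zero_det_smul_one_add_ne_zero [FiniteDimensional K C] (hX : 0 < finrank K X)
    (hXC : finrank K X ≤ finrank K C) (A : C →ₗ[K] Module.End K X) :
    ∃ (t : K) (c : C), c ≠ 0 ∧ (t • 1 + A c).det ≠ 0 := by
  rcases finite_or_infinite K with hK | hK
  · let bX := finBasis K X
    let bC := finBasis K C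
    have : Nonempty (Fin (finrank K X)) := ⟨⟨0, hX⟩⟩
    obtain ⟨t, c, hc, hdet⟩ := Matrix.exists_det_smul_one_add_sum_ne_zero_of_finite
      (by simpa using hXC) fun k => toMatrix bX bX (A (bC k))
    refine ⟨t, bC.equivFun.symm c, (LinearEquiv.map_ne_zero_iff _).2 hc, ?_⟩
    simpa only [← LinearMap.det_toMatrix bX, map_add, map_smul, toMatrix_one,
      Basis.equivFun_symm_apply, map_sum] using hdet
  · have : Nontrivial C := Module.nontrivial_of_finrank_pos (hX.trans_le hXC)
    obtain ⟨c, hc⟩ := exists_ne (0 : C)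
    obtain ⟨t, ht⟩ := exists_det_smul_one_add_ne_zero (A c)
    exact ⟨t, c, hc, ht⟩

end LinearMap

theorem Module.finite_of_rank_le_natCast {K M : Type*} [DivisionRing K] [AddCommGroup M]
    [Module K M] {n : ℕ} (h : Module.rank K M ≤ n) : Module.Finite K M :=
  rank_lt_aleph0_iff.1 (h.trans_lt Cardinal.natCast_lt_aleph0)

theorem Nat.exists_max_of_forall_le {ι : Type*} [Nonempty ι] (f : ι → ℕ) {N : ℕ}
    (h : ∀ i, f i ≤ N) : ∃ i₀, ∀ i, f i ≤ f i₀ := by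
  have hbdd : BddAbove (Set.range f) := ⟨N, Set.forall_mem_range.2 h⟩
  obtain ⟨i₀, hi₀⟩ := Nat.sSup_mem (Set.range_nonempty f) hbdd
  exact ⟨i₀, fun i => hi₀ ▸ le_csSup hbdd ⟨i, rfl⟩⟩

namespace Submodule

variable {K : Type*} {W Z : Type u} [Field K] [AddCommGroup W] [Module K W] [AddCommGroup Z]
  [Module K Z]

theorem finrank_map_lt_of_not_disjoint_ker (f : W →ₗ[K] Z) {S : Submodule K W}
    [FiniteDimensional K S] (h : ¬Disjoint S (ker f)) : finrank K (S.map f) < finrank K S := by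
  have hker : ker (f ∘ₗ S.subtype) ≠ ⊥ := by
    rwa [ker_comp, Ne, ← disjoint_iff_comap_eq_bot]
  have hrank := (f ∘ₗ S.subtype).finrank_range_add_finrank_ker
  rw [range_comp, range_subtype] at hrank
  have := finrank_eq_zero.not.2 hker
  omega

theorem rank_le_rank_map_add_rank_ker (f : W →ₗ[K] Z) (S : Submodule K W) :
    Module.rank K S ≤ Module.rank K (S.map f) + Module.rank K (ker f) := by
  have hrank := (f ∘ₗ S.subtype).rank_range_add_rank_ker
  rw [range_comp, range_subtype, ker_comp] at hrank
  rw [← hrank, (equivSubtypeMap S _).rank_eq, map_comap_subtype]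
  exact add_le_add_right (rank_mono inf_le_right) _

theorem exists_retraction_of_disjoint {X Y : Submodule K W} (h : Disjoint X Y) :
    ∃ π : W →ₗ[K] X, π ∘ₗ X.subtype = LinearMap.id ∧ Y ≤ ker π := by
  obtain ⟨g, hg⟩ := (Y.mkQ ∘ₗ X.subtype).exists_leftInverse_of_injective <| by
    rwa [ker_comp, ker_mkQ, ← disjoint_iff_comap_eq_bot]
  refine ⟨g ∘ₗ Y.mkQ, hg, fun y hy => ?_⟩
  simp [(Quotient.mk_eq_zero Y).2 hy]

end Submodule

section Bilinear

variable {K U V : Type*} {W Z : Type u} [Field K] [AddCommGroup U] [Module K U] [AddCommGroup V]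
  [Module K V] [AddCommGroup W] [Module K W] [AddCommGroup Z] [Module K Z]

theorem span_setOf_eq_map₂ (φ : U →ₗ[K] V →ₗ[K] W) :
    Submodule.span K {w : W | ∃ (u : U) (v : V), w = φ u v} = Submodule.map₂ φ ⊤ ⊤ := by
  rw [Submodule.map₂_eq_span_image2]
  congr
  ext
  simp [eq_comm]

theorem range_compr₂_apply (φ : U →ₗ[K] V →ₗ[K] W) (g : W →ₗ[K] Z) (u : U) :
    range (φ.compr₂ g u) = (range (φ u)).map g :=
  range_comp _ _

theorem range_flip_compr₂_apply (φ : U →ₗ[K] V →ₗ[K] W) (g : W →ₗ[K] Z) (v : V) :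
    range ((φ.compr₂ g).flip v) = (range (φ.flip v)).map g :=
  range_comp (φ.flip v) g

theorem not_disjoint_range_of_finrank_le (φ : U →ₗ[K] V →ₗ[K] W) {u₀ : U} {v₀ : V}
    [∀ u, FiniteDimensional K (range (φ u))] [FiniteDimensional K (range (φ.flip v₀))]
    (hu₀ : ∀ u, finrank K (range (φ u)) ≤ finrank K (range (φ u₀)))
    (hpos : 0 < finrank K (range (φ u₀)))
    (hle : finrank K (range (φ u₀)) ≤ finrank K (range (φ.flip v₀))) :
    ¬Disjoint (range (φ u₀)) (range (φ.flip v₀)) := by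
  intro hdisj
  set X := range (φ u₀)
  obtain ⟨π, hπX, hπY⟩ := Submodule.exists_retraction_of_disjoint hdisj
  obtain ⟨s, hs⟩ := (φ u₀).rangeRestrict.exists_rightInverse_of_surjective (range_rangeRestrict _)
  obtain ⟨r, hr⟩ :=
    (φ.flip v₀).rangeRestrict.exists_rightInverse_of_surjective (range_rangeRestrict _)
  let T : U →ₗ[K] Module.End K X := (φ.compl₂ s).compr₂ π
  have hT₀ : T u₀ = 1 := by
    ext x
    simpa [T] using congr($hπX ($hs x))
  obtain ⟨t, y, hy, hdet⟩ := exists_ne_zero_det_smul_one_add_ne_zero hpos hle (T ∘ₗ r)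
  set u := t • u₀ + r y
  have hφu : φ u v₀ = y := by
    have h₀ : φ u₀ v₀ = 0 := Submodule.disjoint_def.1 hdisj _ ⟨v₀, rfl⟩ ⟨u₀, rfl⟩
    simpa [u, h₀] using congr(($hr y : W))
  have hsurj : Function.Surjective (T u) := by
    have hTu : T u = t • 1 + (T ∘ₗ r) y := by simp [u, hT₀]
    rw [← hTu, ← isUnit_iff_ne_zero, ← isUnit_iff_isUnit_det, End.isUnit_iff] at hdet
    exact hdet.surjective
  have hX : finrank K X ≤ finrank K ((range (φ u)).map π) := by
    rw [← finrank_top K X]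
    refine Submodule.finrank_mono fun z _ => ?_
    obtain ⟨x, rfl⟩ := hsurj z
    exact ⟨_, ⟨s x, rfl⟩, rfl⟩
  have hdrop := Submodule.finrank_map_lt_of_not_disjoint_ker π (S := range (φ u)) fun h =>
    hy <| Subtype.ext <| Submodule.disjoint_def.1 h _ (hφu ▸ ⟨v₀, rfl⟩) (hπY y.2)
  have := hu₀ u
  omega

theorem not_disjoint_range_range_flip (φ : U →ₗ[K] V →ₗ[K] W) {u₀ : U} {v₀ : V}
    [∀ u, FiniteDimensional K (range (φ u))] [∀ v, FiniteDimensional K (range (φ.flip v))]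
    (hu₀ : ∀ u, finrank K (range (φ u)) ≤ finrank K (range (φ u₀)))
    (hv₀ : ∀ v, finrank K (range (φ.flip v)) ≤ finrank K (range (φ.flip v₀)))
    (hpos : 0 < finrank K (range (φ u₀))) :
    ¬Disjoint (range (φ u₀)) (range (φ.flip v₀)) := by
  rcases le_total (finrank K (range (φ u₀))) (finrank K (range (φ.flip v₀))) with h | h
  · exact not_disjoint_range_of_finrank_le φ hu₀ hpos h
  · have hpos' : 0 < finrank K (range (φ.flip v₀)) := by
      obtain ⟨_, ⟨v, rfl⟩, hv⟩ :=
        Submodule.exists_mem_ne_zero_of_ne_bot (Submodule.finrank_eq_zero.not.1 hpos.ne')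
      refine (Nat.pos_of_ne_zero fun h₀ => hv ?_).trans_le (hv₀ v)
      exact (Submodule.eq_bot_iff _).1 (Submodule.finrank_eq_zero.1 h₀) _ ⟨u₀, rfl⟩
    have (u : U) : FiniteDimensional K (range (φ.flip.flip u)) := by
      rw [LinearMap.flip_flip]; infer_instance
    rw [disjoint_comm]
    exact not_disjoint_range_of_finrank_le φ.flip hv₀ hpos' h

theorem rank_range_compr₂_mkQ_le (φ : U →ₗ[K] V →ₗ[K] W) {m : ℕ}
    (hm : ∀ u, Module.rank K (range (φ u)) ≤ (m + 1 : ℕ))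
    [∀ v, FiniteDimensional K (range (φ.flip v))] {v₀ : V}
    (hv₀ : ∀ v, finrank K (range (φ.flip v)) ≤ finrank K (range (φ.flip v₀))) (u : U) :
    Module.rank K (range (φ.compr₂ (range (φ.flip v₀)).mkQ u)) ≤ m := by
  have (u : U) : FiniteDimensional K (range (φ u)) := Module.finite_of_rank_le_natCast (hm u)
  have hmU (u : U) : finrank K (range (φ u)) ≤ m + 1 := finrank_le_of_rank_le (hm u)
  rw [range_compr₂_apply, ← finrank_eq_rank, Nat.cast_le]
  rcases (hmU u).lt_or_eq with h | h
  · exact (Submodule.finrank_map_le _ _).trans (Nat.le_of_lt_succ h)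
  · have hdrop := Submodule.finrank_map_lt_of_not_disjoint_ker (range (φ.flip v₀)).mkQ <| by
      rw [Submodule.ker_mkQ]
      exact not_disjoint_range_range_flip φ (fun u' => h ▸ hmU u') hv₀ (by omega)
    omega

end Bilinear

/-- P. M. Neumann's lemma: let `φ : U × V → W` be a bilinear map of `K`-vector spaces such
that `dim φ(u, V) ≤ m` for all `u ∈ U` and `dim φ(U, v) ≤ l` for all `v ∈ V`.  Then the
span of `φ(U, V)` has dimension at most `m · l`. -/
theorem neumann_bilinear_dim_le
    {K U V W : Type*} [Field K]
    [AddCommGroup U] [Module K U] [AddCommGroup V] [Module K V]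
    [AddCommGroup W] [Module K W]
    (φ : U →ₗ[K] V →ₗ[K] W) (m l : ℕ)
    (hm : ∀ u : U, Module.rank K (LinearMap.range (φ u)) ≤ (m : Cardinal))
    (hl : ∀ v : V, Module.rank K (LinearMap.range (φ.flip v)) ≤ (l : Cardinal)) :
    Module.rank K (Submodule.span K {w : W | ∃ (u : U) (v : V), w = φ u v}) ≤
      ((m * l : ℕ) : Cardinal) := by
  rw [span_setOf_eq_map₂]
  induction m generalizing W with
  | zero =>
    have hφ : Submodule.map₂ φ ⊤ ⊤ = ⊥ := eq_bot_iff.2 <| Submodule.map₂_le.2 fun u _ v _ =>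
      (show range (φ u) = ⊥ by simpa using hm u) ▸ ⟨v, rfl⟩
    simp [hφ]
  | succ m ih =>
    have (v : V) : FiniteDimensional K (range (φ.flip v)) :=
      Module.finite_of_rank_le_natCast (hl v)
    obtain ⟨v₀, hv₀⟩ := Nat.exists_max_of_forall_le (fun v => finrank K (range (φ.flip v)))
      fun v => finrank_le_of_rank_le (hl v)
    set Y := range (φ.flip v₀)
    calc Module.rank K (Submodule.map₂ φ ⊤ ⊤)
        ≤ Module.rank K (Submodule.map₂ (φ.compr₂ Y.mkQ) ⊤ ⊤) + Module.rank K Y :=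
          (Submodule.rank_le_rank_map_add_rank_ker Y.mkQ _).trans_eq
            (by rw [Submodule.map_map₂, Submodule.ker_mkQ])
      _ ≤ (m * l : ℕ) + l := by
          refine add_le_add (ih _ (rank_range_compr₂_mkQ_le φ hm hv₀) fun v => ?_) (hl v₀)
          rw [range_flip_compr₂_apply]
          exact (rank_map_le _ _).trans (hl v)
      _ = ((m + 1) * l : ℕ) := by push_cast; ring
end

section
/- Let V be a vector space over a field K and T ⊆ V a nonempty subset stable under multiplication by scalars. Suppose T has codimension at most n in V, meaning there exist v_1,...,v_n ∈ V such that every element of V can be written as t + λ_1 v_1 + ... + λ_n v_n with t ∈ T and λ_1,...,λ_n ∈ K. Then the K-linear span of T equals 4^n·T = {t_1 + t_2 + ... + t_{4^n} : t_1,...,t_{4^n} ∈ T}. -/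
section Aux

variable {K V : Type*} [Field K] [AddCommGroup V] [Module K V]

/-- sums of `m` elements of `S` -/
def msum (m : ℕ) (S : Set V) : Set V :=
  {x : V | ∃ t : Fin m → V, (∀ i, t i ∈ S) ∧ x = ∑ i, t i}

lemma mem_msum_zero {S : Set V} {x : V} (h : x ∈ msum 0 S) : x = 0 := by
  obtain ⟨t, _, rfl⟩ := h; simp

lemma zero_mem_msum {S : Set V} (h0 : (0 : V) ∈ S) (m : ℕ) : (0 : V) ∈ msum m S :=
  ⟨fun _ => 0, fun _ => h0, by simp⟩

lemma mem_msum_one {S : Set V} {a : V} (ha : a ∈ S) : a ∈ msum 1 S :=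
  ⟨fun _ => a, fun _ => ha, by simp⟩

lemma mem_msum_succ {S : Set V} {m : ℕ} {x : V} :
    x ∈ msum (m + 1) S ↔ ∃ a ∈ S, ∃ y ∈ msum m S, x = a + y := by
  constructor
  · rintro ⟨t, ht, rfl⟩
    exact ⟨t 0, ht 0, ∑ i : Fin m, t i.succ, ⟨fun i => t i.succ, fun i => ht i.succ, rfl⟩,
      Fin.sum_univ_succ t⟩
  · rintro ⟨a, ha, y, ⟨t, ht, rfl⟩, rfl⟩
    refine ⟨Fin.cons a t, ?_, ?_⟩
    · intro i
      refine Fin.cases ?_ ?_ i <;> simp [ha, ht]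
    · simp [Fin.sum_cons]

lemma add_mem_msum {S : Set V} {m k : ℕ} {x y : V}
    (hx : x ∈ msum m S) (hy : y ∈ msum k S) : x + y ∈ msum (m + k) S := by
  induction k generalizing y with
  | zero => rw [mem_msum_zero hy]; simpa using hx
  | succ k ih =>
    obtain ⟨a, ha, z, hz, rfl⟩ := mem_msum_succ.mp hy
    exact mem_msum_succ.mpr ⟨a, ha, x + z, ih hz, by abel⟩

lemma smul_mem_msum {S : Set V} (hst : ∀ c : K, ∀ t ∈ S, c • t ∈ S) {m : ℕ} {x : V}
    (hx : x ∈ msum m S) (c : K) : c • x ∈ msum m S := by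
  obtain ⟨t, ht, rfl⟩ := hx
  exact ⟨fun i => c • t i, fun i => hst c _ (ht i), by rw [Finset.smul_sum]⟩

lemma msum_le {S : Set V} (h0 : (0 : V) ∈ S) {m k : ℕ} (hmk : m ≤ k) {x : V}
    (hx : x ∈ msum m S) : x ∈ msum k S := by
  obtain ⟨d, rfl⟩ := Nat.exists_eq_add_of_le hmk
  have := add_mem_msum hx (zero_mem_msum h0 d)
  rwa [add_zero] at this

lemma msum_mono_set {S S' : Set V} (h : S ⊆ S') {m : ℕ} {x : V}
    (hx : x ∈ msum m S) : x ∈ msum m S' := by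
  obtain ⟨t, ht, rfl⟩ := hx
  exact ⟨t, fun i => h (ht i), rfl⟩

lemma msum_flatten {S : Set V} {m k : ℕ} {x : V}
    (hx : x ∈ msum m (msum k S)) : x ∈ msum (m * k) S := by
  induction m generalizing x with
  | zero => rw [mem_msum_zero hx]; exact ⟨fun _ => 0, by simp, by simp⟩
  | succ m ih =>
    obtain ⟨a, ha, y, hy, rfl⟩ := mem_msum_succ.mp hx
    have : a + y ∈ msum (k + m * k) S := add_mem_msum ha (ih hy)
    rwa [show (m + 1) * k = k + m * k by ring]

lemma msum_subset_span {S : Set V} {m : ℕ} {x : V}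
    (hx : x ∈ msum m S) : x ∈ Submodule.span K S := by
  obtain ⟨t, ht, rfl⟩ := hx
  exact Submodule.sum_mem _ fun i _ => Submodule.subset_span (ht i)

lemma span_exists_msum {S : Set V} {x : V}
    (hst : ∀ c : K, ∀ t ∈ S, c • t ∈ S)
    (hx : x ∈ Submodule.span K S) : ∃ m, x ∈ msum m S := by
  induction hx using Submodule.span_induction with
  | mem y hy => exact ⟨1, mem_msum_one hy⟩
  | zero => exact ⟨0, ⟨fun _ => 0, by simp, by simp⟩⟩
  | add y z _ _ hy hz =>
    obtain ⟨m, hm⟩ := hy; obtain ⟨k, hk⟩ := hz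
    exact ⟨m + k, add_mem_msum hm hk⟩
  | smul c y _ hy =>
    obtain ⟨m, hm⟩ := hy
    exact ⟨m, smul_mem_msum hst hm c⟩

/-- descent lemma -/
lemma msum_descent {S : Set V} {w : V}
    (h0 : (0 : V) ∈ S) (hst : ∀ c : K, ∀ t ∈ S, c • t ∈ S)
    (H2 : ∀ a b : V, a ∈ S → b ∈ S → ∃ s ∈ S, ∃ c : K, a + b = s + c • w) :
    ∀ m : ℕ, w ∈ msum m S → w ∈ msum 3 S := by
  intro m
  induction m using Nat.strong_induction_on with
  | _ m ih =>
    intro hw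
    by_cases hm : m ≤ 3
    · exact msum_le h0 hm hw
    · push_neg at hm
      obtain ⟨m'', rfl⟩ : ∃ m'', m = m'' + 1 + 1 := ⟨m - 2, by omega⟩
      obtain ⟨a, ha, y, hy, hwy⟩ := mem_msum_succ.mp hw
      obtain ⟨b, hb, rest, hrest, rfl⟩ := mem_msum_succ.mp hy
      obtain ⟨s, hs, c, hc⟩ := H2 a b ha hb
      by_cases hc1 : c = 1
      · -- w = a + b + (-1) • s
        subst hc1
        rw [one_smul] at hc
        have hww : w = a + (b + (-1 : K) • s) := by
          have h1 : w = a + b - s := by rw [hc]; abel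
          rw [h1, neg_one_smul]; abel
        rw [show (3:ℕ) = 1 + 1 + 1 from rfl]
        exact mem_msum_succ.mpr ⟨a, ha, _, mem_msum_succ.mpr
          ⟨b, hb, _, mem_msum_one (hst (-1) s hs), rfl⟩, hww⟩
      · set u := c • w with hu
        have h1' : w = s + u + rest := by
          calc w = a + b + rest := by rw [hwy]; abel
          _ = s + u + rest := by rw [hc]
        have h2 : w - u = s + rest := by rw [h1']; abel
        rw [hu] at h2
        have hkey : (1 - c) • w = s + rest := by
          rw [sub_smul, one_smul]; exact h2
        have hne : (1 : K) - c ≠ 0 := sub_ne_zero.mpr (Ne.symm hc1)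
        have hsr : s + rest ∈ msum (1 + m'') S :=
          add_mem_msum (mem_msum_one hs) hrest
        have hcw : (1 - c) • w ∈ msum (1 + m'') S := by rw [hkey]; exact hsr
        have hw' : w ∈ msum (1 + m'') S := by
          have := smul_mem_msum hst hcw (1 - c)⁻¹
          rwa [smul_smul, inv_mul_cancel₀ hne, one_smul] at this
        exact ih (1 + m'') (by omega) hw'

lemma aux_main (n : ℕ) :
    ∀ (T : Set V), T.Nonempty → (∀ c : K, ∀ t ∈ T, c • t ∈ T) →
    ∀ (v : Fin n → V), (∀ x : V, ∃ t ∈ T, ∃ lam : Fin n → K, x = t + ∑ i, lam i • v i) →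
    ∀ x ∈ Submodule.span K T, x ∈ msum (4 ^ n) T := by
  induction n with
  | zero =>
    intro T hne hstab v hcodim x hx
    obtain ⟨t, ht, lam, hlam⟩ := hcodim x
    have hxt : x = t := by simpa using hlam
    subst hxt
    rw [pow_zero]
    exact mem_msum_one ht
  | succ n ih =>
    intro T hne hstab v hcodim x hx
    obtain ⟨t0, ht0⟩ := hne
    have h0 : (0 : V) ∈ T := by simpa using hstab 0 t0 ht0
    set w := v (Fin.last n) with hw
    set T' : Set V := {y : V | ∃ t ∈ T, ∃ c : K, y = t + c • w} with hT'
    have hTT' : T ⊆ T' := fun t ht => ⟨t, ht, 0, by simp⟩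
    have hne' : T'.Nonempty := ⟨t0, hTT' ht0⟩
    have hstab' : ∀ c : K, ∀ t ∈ T', c • t ∈ T' := by
      rintro c y ⟨t, ht, d, rfl⟩
      exact ⟨c • t, hstab c t ht, c * d, by rw [smul_add, smul_smul]⟩
    have hcodim' : ∀ x : V, ∃ t ∈ T', ∃ lam : Fin n → K,
        x = t + ∑ i, lam i • (v ∘ Fin.castSucc) i := by
      intro y
      obtain ⟨t, ht, lam, hlam⟩ := hcodim y
      refine ⟨t + lam (Fin.last n) • w, ⟨t, ht, lam (Fin.last n), rfl⟩,
        fun i => lam i.castSucc, ?_⟩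
      rw [hlam, Fin.sum_univ_castSucc (f := fun i => lam i • v i)]
      simp only [Function.comp]
      abel
    have ihT' := ih T' hne' hstab' (v ∘ Fin.castSucc) hcodim'
    -- decompose elements of msum m T'
    have decomp : ∀ (m : ℕ) (y : V), y ∈ msum m T' →
        ∃ s ∈ msum m T, ∃ c : K, y = s + c • w := by
      intro m
      induction m with
      | zero =>
        intro y hy
        exact ⟨0, ⟨fun _ => 0, by simp, by simp⟩, 0, by rw [mem_msum_zero hy]; simp⟩
      | succ m ihm =>
        intro y hy
        obtain ⟨a, ⟨t, ht, c, rfl⟩, z, hz, rfl⟩ := mem_msum_succ.mp hy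
        obtain ⟨s, hs, d, rfl⟩ := ihm z hz
        refine ⟨t + s, ?_, c + d, by rw [add_smul]; abel⟩
        have := add_mem_msum (mem_msum_one ht) hs
        rwa [show 1 + m = m + 1 by omega] at this
    have H : ∀ y : V, y ∈ Submodule.span K T → ∃ s ∈ msum (4 ^ n) T, ∃ c : K, y = s + c • w := by
      intro y hy
      have hy' : y ∈ Submodule.span K T' := Submodule.span_mono hTT' hy
      exact decomp _ y (ihT' y hy')
    obtain ⟨s, hs, c, hxs⟩ := H x hx
    by_cases hc : c = 0
    · subst hc
      rw [zero_smul, add_zero] at hxs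
      subst hxs
      exact msum_le h0 (Nat.pow_le_pow_right (by norm_num) (Nat.le_succ n)) hs
    · -- w ∈ span T
      have hwspan : w ∈ Submodule.span K T := by
        have hcw : c • w ∈ Submodule.span K T := by
          have hdiff : c • w = x - s := by rw [hxs]; abel
          rw [hdiff]
          exact Submodule.sub_mem _ hx (msum_subset_span hs)
        have := Submodule.smul_mem _ c⁻¹ hcw
        rwa [smul_smul, inv_mul_cancel₀ hc, one_smul] at this
      set S : Set V := msum (4 ^ n) T with hS
      have h0S : (0 : V) ∈ S := zero_mem_msum h0 _
      have hstS : ∀ c : K, ∀ t ∈ S, c • t ∈ S := fun c t ht => smul_mem_msum hstab ht c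
      have hTS : T ⊆ S := fun t ht =>
        msum_le h0 (Nat.one_le_pow _ _ (by norm_num)) (mem_msum_one ht)
      have H2 : ∀ a b : V, a ∈ S → b ∈ S → ∃ s ∈ S, ∃ c : K, a + b = s + c • w := by
        intro a b ha hb
        exact H (a + b) (Submodule.add_mem _ (msum_subset_span ha) (msum_subset_span hb))
      obtain ⟨m, hm⟩ := span_exists_msum hstab hwspan
      have hwS : w ∈ msum m S := msum_mono_set hTS hm
      have hw3 : w ∈ msum 3 S := msum_descent h0S hstS H2 m hwS
      have hcw3 : c • w ∈ msum 3 S := smul_mem_msum hstS hw3 c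
      have hx4 : x ∈ msum (1 + 3) S := by
        rw [hxs]; exact add_mem_msum (mem_msum_one hs) hcw3
      have := msum_flatten hx4
      rwa [show (1 + 3) * 4 ^ n = 4 ^ (n + 1) by ring] at this

end Aux

/-- Bahturin–Petrogradsky: let `V` be a `K`-vector space and `T ⊆ V` a nonempty subset
stable under multiplication by scalars, of codimension at most `n` in the sense that every
element of `V` is a sum of an element of `T` and a linear combination of fixed vectors
`v_1, ..., v_n`.  Then the linear span of `T` equals `4^n · T`, the set of sums of `4^n`
elements of `T`. -/
theorem span_eq_sums_of_codim_le
    {K V : Type*} [Field K] [AddCommGroup V] [Module K V]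
    (T : Set V) (hne : T.Nonempty)
    (hstab : ∀ (c : K), ∀ t ∈ T, c • t ∈ T)
    (n : ℕ) (v : Fin n → V)
    (hcodim : ∀ x : V, ∃ t ∈ T, ∃ lam : Fin n → K, x = t + ∑ i, lam i • v i) :
    (Submodule.span K T : Set V) =
      {x : V | ∃ t : Fin (4 ^ n) → V, (∀ i, t i ∈ T) ∧ x = ∑ i, t i} := by
  ext x
  constructor
  · intro hx
    exact aux_main n T hne hstab v hcodim x hx
  · intro hx
    exact msum_subset_span (S := T) hx
end

section
/- Let L be a Lie algebra over a field K. (1) If I is a finite-dimensional ideal of L, then Δ(L/I) = (Δ(L) + I)/I; that is, Δ(L/I) is exactly the image of Δ(L) under the quotient map L → L/I. (2) If H is a Lie subalgebra of finite codimension in L (as a K-subspace), then Δ(H) = Δ(L) ∩ H, where Δ(H) is computed inside the Lie algebra H. -/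
/-- The delta-set of a Lie algebra `L`: the set of elements `x ∈ L` of finite width, i.e.
such that `[L, x]` is finite dimensional. -/
def deltaSet (K L : Type*) [Field K] [LieRing L] [LieAlgebra K L] : Set L :=
  {x : L | FiniteDimensional K (Submodule.span K {z : L | ∃ y : L, z = ⁅y, x⁆})}

/-!
Membership of `x` in `Δ(L)` says that the range of `ad x` is finite dimensional. A morphism of
Lie algebras `f` carries the range of `ad x` onto the image under `ad (f x)` of the range of `f`.
For the quotient map `L → L ⧸ I` that range is everything and the kernel `I` is finite
dimensional, so `ad x` has finite rank iff `ad (x + I)` has. For the inclusion `H → L` the map is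
injective, and `ad x` maps `H` onto a subspace of finite codimension in the range of `ad x`.
-/

open LieAlgebra

namespace Submodule

theorem fg_map_iff_of_fg_ker {R M N : Type*} [Ring R] [IsNoetherianRing R] [AddCommGroup M]
    [Module R M] [AddCommGroup N] [Module R N] (f : M →ₗ[R] N) (hf : (LinearMap.ker f).FG)
    {p : Submodule R M} : (p.map f).FG ↔ p.FG :=
  ⟨fun h ↦ fg_of_fg_map_of_fg_inf_ker f h (hf.of_le inf_le_right), FG.map f⟩

end Submodule

namespace LinearMap

theorem range_fg_iff_fg_map_of_finiteDimensional_quotient {K M N : Type*} [DivisionRing K]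
    [AddCommGroup M] [Module K M] [AddCommGroup N] [Module K N] (f : M →ₗ[K] N)
    (p : Submodule K M) [FiniteDimensional K (M ⧸ p)] : (range f).FG ↔ (p.map f).FG := by
  refine ⟨fun h ↦ h.of_le map_le_range, fun h ↦ ?_⟩
  obtain ⟨q, hpq⟩ := p.exists_isCompl
  have : FiniteDimensional K q := (p.quotientEquivOfIsCompl q hpq).finiteDimensional
  rw [range_eq_map, ← hpq.sup_eq_top, Submodule.map_sup]
  exact h.sup ((Module.Finite.iff_fg.1 this).map f)

end LinearMap

def LieIdeal.Quotient.mk {K L : Type*} [CommRing K] [LieRing L] [LieAlgebra K L]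
    (I : LieIdeal K L) : L →ₗ⁅K⁆ L ⧸ I :=
  { (LieSubmodule.Quotient.mk' I : L →ₗ[K] L ⧸ I) with
    map_lie' := fun {x y} ↦ LieSubmodule.Quotient.mk_bracket I x y }

section

variable {K L L' : Type*} [Field K] [LieRing L] [LieAlgebra K L] [LieRing L'] [LieAlgebra K L']

theorem mem_deltaSet_iff_fg_range_ad {x : L} :
    x ∈ deltaSet K L ↔ (LinearMap.range (ad K L x)).FG := by
  have h : {z : L | ∃ y : L, z = ⁅y, x⁆} = Set.range (ad K L x) := by
    ext z
    refine ⟨fun ⟨y, hy⟩ ↦ ⟨-y, by rw [hy, ad_apply, lie_neg, lie_skew]⟩, fun ⟨y, hy⟩ ↦ ⟨-y, ?_⟩⟩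
    rw [← hy, ad_apply, neg_lie, lie_skew]
  rw [deltaSet, Set.mem_ofPred_eq, h, ← LinearMap.coe_range, Submodule.span_eq,
    Submodule.fg_iff_finiteDimensional]

theorem LieHom.map_range_ad (f : L →ₗ⁅K⁆ L') (x : L) :
    (LinearMap.range (ad K L x)).map (f : L →ₗ[K] L') =
      (LinearMap.range (f : L →ₗ[K] L')).map (ad K L' (f x)) := by
  rw [LinearMap.range_eq_map, LinearMap.range_eq_map, ← Submodule.map_comp, ← Submodule.map_comp]
  congr 1
  ext y
  simp [ad_apply]

theorem LieHom.mem_deltaSet_iff_of_surjective (f : L →ₗ⁅K⁆ L') (hf : Function.Surjective f)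
    (hker : (LinearMap.ker (f : L →ₗ[K] L')).FG) (x : L) :
    f x ∈ deltaSet K L' ↔ x ∈ deltaSet K L := by
  rw [mem_deltaSet_iff_fg_range_ad, mem_deltaSet_iff_fg_range_ad,
    ← Submodule.fg_map_iff_of_fg_ker _ hker, f.map_range_ad, LinearMap.range_eq_top.2 hf,
    ← LinearMap.range_eq_map]

theorem LieHom.deltaSet_eq_image_of_surjective (f : L →ₗ⁅K⁆ L') (hf : Function.Surjective f)
    (hker : (LinearMap.ker (f : L →ₗ[K] L')).FG) : deltaSet K L' = f '' deltaSet K L := by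
  rw [← Set.image_preimage_eq (deltaSet K L') hf]
  congr 1
  ext x
  exact f.mem_deltaSet_iff_of_surjective hf hker x

theorem LieSubalgebra.mem_deltaSet_iff_of_finiteDimensional_quotient (H : LieSubalgebra K L)
    [FiniteDimensional K (L ⧸ H.toSubmodule)] (x : H) :
    x ∈ deltaSet K H ↔ (x : L) ∈ deltaSet K L := by
  have hrange : LinearMap.range (H.incl : H →ₗ[K] L) = H.toSubmodule := H.toSubmodule.range_subtype
  rw [mem_deltaSet_iff_fg_range_ad, mem_deltaSet_iff_fg_range_ad,
    ← Submodule.fg_map_iff (f := (H.incl : H →ₗ[K] L)) Subtype.val_injective,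
    H.incl.map_range_ad, hrange,
    LinearMap.range_fg_iff_fg_map_of_finiteDimensional_quotient _ H.toSubmodule]
  rfl

end

/-- Riley–Shalev: (1) if `I` is a finite-dimensional ideal of a Lie algebra `L`, then
`Δ(L/I) = (Δ(L) + I)/I`, i.e. `Δ(L/I)` is the image of `Δ(L)` under the quotient map; and
(2) if `H` is a subalgebra of finite codimension in `L`, then `Δ(H) = Δ(L) ∩ H`. -/
theorem deltaSet_quotient_and_subalgebra
    (K L : Type*) [Field K] [LieRing L] [LieAlgebra K L] :
    (∀ I : LieIdeal K L, FiniteDimensional K I →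
      deltaSet K (L ⧸ I) =
        (LieSubmodule.Quotient.mk (N := I)) '' deltaSet K L) ∧
    (∀ H : LieSubalgebra K L, FiniteDimensional K (L ⧸ H.toSubmodule) →
      deltaSet K H = ((↑) : H → L) ⁻¹' deltaSet K L) := by
  refine ⟨fun I hI ↦ ?_, fun H hH ↦ ?_⟩
  · exact (LieIdeal.Quotient.mk I).deltaSet_eq_image_of_surjective
      (LieSubmodule.Quotient.surjective_mk' I)
      (I.toSubmodule.ker_mkQ ▸ Module.Finite.iff_fg.1 hI)
  · ext x
    exact H.mem_deltaSet_iff_of_finiteDimensional_quotient x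
end
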